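/- arXiv:2307.09486 — 3 statements merged into one kernel-verified Lean document; each statement's English description precedes it below -/
import Mathlib

section
/- Let k ≥ 2 and suppose nonnegative integers n ≥ m ≥ l ≥ 0, d ≥ 2, 1 ≤ a ≤ 9 satisfy L_n^{(k)} · L_m^{(k)} · L_l^{(k)} = a·(10^d − 1)/9. Then (n − 3)/5 < d, and if moreover n ≥ 2 then d < n + 2 (in particular d ≤ 2n). -/
/-!
The product lies between `10 ^ (d - 1)` and `10 ^ d`. Since `k ≥ 2`, the sequence grows at least
like the Fibonacci numbers, whose growth factor over five steps exceeds `10`, so `L n ≥ 10 ^ d`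
once `n ≥ 5 d + 1`; as the other two factors are positive this bounds `n` by `d`. Conversely every
term is at most the sum of all earlier ones, so `L n ≤ 2 ^ (n + 1)`, the product is at most
`8 ^ (n + 1)`, and comparing with `10 ^ d` bounds `d` by `n`.
-/

/-- The `k`-generalized Lucas sequence: `L 0 = 2`, `L 1 = 1`, and for `n ≥ 2`,
`L n = L (n-1) + L (n-2) + ⋯ + L (n-k)`, where terms with negative index count as `0`. -/
def lucasK (k : ℕ) : ℕ → ℕ
  | 0 => 2
  | 1 => 1
  | n + 2 => ∑ j ∈ Finset.range k, if _ : j ≤ n + 1 then lucasK k (n + 1 - j) else 0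
termination_by n => n
decreasing_by omega

open Finset

section Superadditive

variable {u : ℕ → ℕ} (hu : ∀ n, u n + u (n + 1) ≤ u (n + 2))
include hu

/-- Five steps give `u (j + 5) ≥ 3 u j + 5 u (j + 1)` and `u (j + 6) ≥ 5 u j + 8 u (j + 1)`. -/
theorem ten_mul_le_of_add_le {j c : ℕ} (h₀ : c ≤ u j) (h₁ : 2 * c ≤ u (j + 1)) :
    10 * c ≤ u (j + 5) ∧ 2 * (10 * c) ≤ u (j + 6) := by
  have h₂ : u j + u (j + 1) ≤ u (j + 2) := hu j
  have h₃ : u (j + 1) + u (j + 2) ≤ u (j + 3) := hu (j + 1)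
  have h₄ : u (j + 2) + u (j + 3) ≤ u (j + 4) := hu (j + 2)
  have h₅ : u (j + 3) + u (j + 4) ≤ u (j + 5) := hu (j + 3)
  have h₆ : u (j + 4) + u (j + 5) ≤ u (j + 6) := hu (j + 4)
  constructor <;> omega

theorem ten_pow_mul_le_of_add_le {j c : ℕ} (h₀ : c ≤ u j) (h₁ : 2 * c ≤ u (j + 1))
    (d : ℕ) : 10 ^ d * c ≤ u (j + 5 * d) := by
  induction d generalizing j c with
  | zero => simpa using h₀
  | succ d ih =>
    obtain ⟨h₅, h₆⟩ := ten_mul_le_of_add_le hu h₀ h₁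
    rw [pow_succ, mul_assoc, show j + 5 * (d + 1) = j + 5 + 5 * d by ring]
    exact ih h₅ h₆

end Superadditive

section Lucas

variable {k : ℕ}

theorem lucasK_zero : lucasK k 0 = 2 := by rw [lucasK]

theorem lucasK_one : lucasK k 1 = 1 := by rw [lucasK]

theorem lucasK_add_two (n : ℕ) :
    lucasK k (n + 2) = ∑ j ∈ range k, if j ≤ n + 1 then lucasK k (n + 1 - j) else 0 := by
  rw [lucasK]
  simp only [dite_eq_ite]

theorem lucasK_add_two_le_sum (n : ℕ) :
    lucasK k (n + 2) ≤ ∑ i ∈ range (n + 2), lucasK k i := by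
  rw [lucasK_add_two, ← sum_filter, ← sum_range_reflect]
  refine sum_le_sum_of_subset_of_nonneg (fun j hj => ?_) fun _ _ _ => Nat.zero_le _
  simp only [mem_filter] at hj
  simpa [Nat.lt_succ_iff] using hj.2

theorem lucasK_add_lucasK_succ_le (hk : 2 ≤ k) (n : ℕ) :
    lucasK k n + lucasK k (n + 1) ≤ lucasK k (n + 2) := by
  rw [lucasK_add_two, ← sum_filter, add_comm]
  calc lucasK k (n + 1) + lucasK k n
      = ∑ j ∈ range 2, lucasK k (n + 1 - j) := by simp [sum_range_succ]
    _ ≤ ∑ j ∈ (range k).filter (· ≤ n + 1), lucasK k (n + 1 - j) := by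
      refine sum_le_sum_of_subset fun j hj => ?_
      simp only [mem_range] at hj
      simp only [mem_filter, mem_range]
      omega

theorem lucasK_pos (hk : 2 ≤ k) (n : ℕ) : 0 < lucasK k n := by
  induction n using Nat.twoStepInduction with
  | zero => simp [lucasK_zero]
  | one => simp [lucasK_one]
  | more n _ ih => exact lt_of_lt_of_le ih (le_of_add_le_right (lucasK_add_lucasK_succ_le hk n))

theorem lucasK_le_lucasK (hk : 2 ≤ k) {i j : ℕ} (hi : 1 ≤ i) (hij : i ≤ j) :
    lucasK k i ≤ lucasK k j := by
  obtain ⟨i, rfl⟩ := Nat.exists_eq_add_of_le' hi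
  obtain ⟨j, rfl⟩ := Nat.exists_eq_add_of_le' (hi.trans hij)
  exact monotone_nat_of_le_succ (f := fun i => lucasK k (i + 1))
    (fun n => le_of_add_le_right (lucasK_add_lucasK_succ_le hk n)) (by omega)

theorem ten_pow_le_lucasK (hk : 2 ≤ k) (d : ℕ) : 10 ^ d ≤ lucasK k (5 * d + 1) := by
  have h₂ : lucasK k 0 + lucasK k 1 ≤ lucasK k 2 := lucasK_add_lucasK_succ_le hk 0
  rw [lucasK_zero, lucasK_one] at h₂
  simpa [add_comm] using ten_pow_mul_le_of_add_le (lucasK_add_lucasK_succ_le hk) (j := 1) (c := 1)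
    lucasK_one.ge (show 2 * 1 ≤ lucasK k 2 by omega) d

theorem lucasK_le_two_pow (n : ℕ) : lucasK k n ≤ 2 ^ (n + 1) := by
  induction n using Nat.strong_induction_on with
  | _ n ih =>
    match n with
    | 0 => simp [lucasK_zero]
    | 1 => simp [lucasK_one]
    | n + 2 =>
      calc lucasK k (n + 2)
          ≤ ∑ i ∈ range (n + 2), lucasK k i := lucasK_add_two_le_sum n
        _ ≤ ∑ i ∈ range (n + 2), 2 * 2 ^ i :=
          sum_le_sum fun i hi => (ih i (mem_range.mp hi)).trans_eq (pow_succ' 2 i)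
        _ ≤ 2 ^ (n + 2 + 1) := by
          rw [← mul_sum, pow_succ' 2 (n + 2)]
          exact Nat.mul_le_mul_left 2 (Nat.geomSum_lt le_rfl fun i hi => mem_range.mp hi).le

end Lucas

theorem nine_mul_repunit_add_one (d : ℕ) : 9 * ((10 ^ d - 1) / 9) + 1 = 10 ^ d := by
  rw [Nat.mul_div_cancel' (by simpa using Nat.sub_one_dvd_pow_sub_one (x := 10) (n := d))]
  exact Nat.sub_add_cancel (Nat.one_le_pow _ _ (by norm_num))

theorem d_bounds_for_repdigit_products_general
    (k n m l d a : ℕ) (hk : 2 ≤ k) (hnm : m ≤ n) (hml : l ≤ m)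
    (ha1 : 1 ≤ a) (ha9 : a ≤ 9)
    (heq : lucasK k n * lucasK k m * lucasK k l = a * ((10 ^ d - 1) / 9)) :
    ((n : ℝ) - 3) / 5 < d ∧ (2 ≤ n → d < n + 2 ∧ d ≤ 2 * n) := by
  set P := lucasK k n * lucasK k m * lucasK k l
  have hR := nine_mul_repunit_add_one d
  have hP_lt : P < 10 ^ d := by nlinarith
  have hP_ge : 10 ^ d ≤ 9 * P + 1 := by nlinarith
  refine ⟨?_, fun hn => ?_⟩
  · have hLn : lucasK k n ≤ P := by
      have := Nat.mul_pos (lucasK_pos hk m) (lucasK_pos hk l)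
      simp only [P, mul_assoc]
      exact Nat.le_mul_of_pos_right _ this
    have hn : n < 5 * d + 1 := by
      by_contra! h
      have := (ten_pow_le_lucasK hk d).trans (lucasK_le_lucasK hk (by omega) h)
      omega
    rw [div_lt_iff₀ (by norm_num), sub_lt_iff_lt_add]
    exact_mod_cast (show n < d * 5 + 3 by omega)
  · have hP_le : P ≤ 8 ^ (n + 1) := by
      have two_pow_le {i : ℕ} (hi : i ≤ n) : lucasK k i ≤ 2 ^ (n + 1) :=
        (lucasK_le_two_pow i).trans (Nat.pow_le_pow_right two_pos (by omega))
      calc P ≤ 2 ^ (n + 1) * 2 ^ (n + 1) * 2 ^ (n + 1) :=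
            Nat.mul_le_mul (Nat.mul_le_mul (two_pow_le le_rfl) (two_pow_le hnm))
              (two_pow_le (hml.trans hnm))
        _ = 8 ^ (n + 1) := by rw [← mul_pow, ← mul_pow]; norm_num
    have h8 : 8 ^ (n + 1) < 10 ^ (n + 1) := Nat.pow_lt_pow_left (by norm_num) (by omega)
    have hd : 10 ^ d < 10 ^ (n + 2) := by rw [pow_succ]; omega
    have := (Nat.pow_lt_pow_iff_right (by norm_num)).mp hd
    omega

theorem d_bounds_for_repdigit_products
    (k n m l d a : ℕ) (hk : 2 ≤ k) (hnm : m ≤ n) (hml : l ≤ m)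
    (hd : 2 ≤ d) (ha1 : 1 ≤ a) (ha9 : a ≤ 9)
    (heq : lucasK k n * lucasK k m * lucasK k l = a * ((10 ^ d - 1) / 9)) :
    ((n : ℝ) - 3) / 5 < d ∧ (2 ≤ n → d < n + 2 ∧ d ≤ 2 * n) :=
  d_bounds_for_repdigit_products_general k n m l d a hk hnm hml ha1 ha9 heq
end

section
/- Let k ≥ 2. There are no integers n, m, l with k ≥ n ≥ m ≥ l ≥ 0, and no d ≥ 2, 1 ≤ a ≤ 9, such that L_n^{(k)} · L_m^{(k)} · L_l^{(k)} = a·(10^d − 1)/9. In other words, equation L_n^{(k)} L_m^{(k)} L_l^{(k)} = a(10^d − 1)/9 with d ≥ 2 has no solution when n ≤ k. -/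
open Finset

lemma lucasK_add_two_eq_sum_range {k n : ℕ} (hnk : n + 2 ≤ k) :
    lucasK k (n + 2) = ∑ j ∈ range (n + 2), lucasK k j := by
  have htrunc : ∑ j ∈ range k, (if _ : j ≤ n + 1 then lucasK k (n + 1 - j) else 0)
      = ∑ j ∈ range (n + 2), lucasK k (n + 1 - j) := by
    rw [← sum_range_add_sum_Ico _ hnk, sum_eq_zero (s := Ico _ _)]
    · exact (add_zero _).trans
        (sum_congr rfl fun j hj => dif_pos (by simp only [mem_range] at hj; omega))
    · exact fun j hj => dif_neg (by simp only [mem_Ico] at hj; omega)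
  rw [lucasK, htrunc, ← sum_range_reflect]
  exact sum_congr rfl fun j hj => by simp only [mem_range] at hj; congr 1; omega

lemma lucasK_add_two_s4 {k n : ℕ} (hnk : n + 2 ≤ k) : lucasK k (n + 2) = 3 * 2 ^ n := by
  induction n with
  | zero => simp [lucasK_add_two_eq_sum_range hnk, sum_range_succ, lucasK]
  | succ n ih =>
    -- `L (n+3)` is `L (n+2)` plus the sum `∑_{j < n+2} L j`, which is again `L (n+2)`.
    rw [lucasK_add_two_eq_sum_range hnk, sum_range_succ, ← lucasK_add_two_eq_sum_range (by omega),
      ih (by omega)]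
    ring

lemma lucasK_dvd_three_mul_two_pow {k i : ℕ} (hik : i ≤ k) : lucasK k i ∣ 3 * 2 ^ (i + 1) := by
  match i with
  | 0 => simp [lucasK]
  | 1 => simp [lucasK]
  | n + 2 =>
    rw [lucasK_add_two_s4 hik]
    exact mul_dvd_mul_left 3 (pow_dvd_pow 2 (by omega))

lemma ten_pow_sub_one_div_nine_mod_ten {d : ℕ} (hd : 1 ≤ d) : (10 ^ d - 1) / 9 % 10 = 1 := by
  have h9 : 9 ∣ 10 ^ d - 1 := by simpa using Nat.sub_dvd_pow_sub_pow 10 1 d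
  have h10 : 10 ∣ 10 ^ d := dvd_pow_self 10 (by omega)
  have hpos : 0 < 10 ^ d := by positivity
  omega

lemma one_lt_ten_pow_sub_one_div_nine {d : ℕ} (hd : 2 ≤ d) : 1 < (10 ^ d - 1) / 9 := by
  have : 10 ^ 2 ≤ 10 ^ d := Nat.pow_le_pow_right (by norm_num) hd
  omega

lemma eq_one_of_dvd_twentyseven_of_mod_ten {r : ℕ} (hr : r ∣ 27) (hr10 : r % 10 = 1) : r = 1 := by
  have : r ≤ 27 := Nat.le_of_dvd (by norm_num) hr
  interval_cases r <;> omega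

theorem no_solution_when_n_le_k_general
    (k n m l d a : ℕ) (hnk : n ≤ k) (hnm : m ≤ n) (hml : l ≤ m)
    (hd : 2 ≤ d)
    (heq : lucasK k n * lucasK k m * lucasK k l = a * ((10 ^ d - 1) / 9)) :
    False := by
  set R := (10 ^ d - 1) / 9
  have hR10 : R % 10 = 1 := ten_pow_sub_one_div_nine_mod_ten (by omega)
  have hprod : lucasK k n * lucasK k m * lucasK k l ∣ 27 * 2 ^ (n + m + l + 3) :=
    (mul_dvd_mul (mul_dvd_mul (lucasK_dvd_three_mul_two_pow hnk)
      (lucasK_dvd_three_mul_two_pow (hnm.trans hnk)))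
      (lucasK_dvd_three_mul_two_pow ((hml.trans hnm).trans hnk))).trans (dvd_of_eq (by ring))
  have hR : R ∣ 27 * 2 ^ (n + m + l + 3) := (Dvd.intro_left a heq.symm).trans hprod
  have hcop : R.Coprime (2 ^ (n + m + l + 3)) :=
    Nat.Coprime.pow_right _ (Nat.coprime_two_right.mpr (Nat.odd_iff.mpr (by omega)))
  have hR1 : R = 1 := eq_one_of_dvd_twentyseven_of_mod_ten (hcop.dvd_of_dvd_mul_right hR) hR10
  exact (one_lt_ten_pow_sub_one_div_nine hd).ne' hR1

theorem no_solution_when_n_le_k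
    (k n m l d a : ℕ) (hk : 2 ≤ k) (hnk : n ≤ k) (hnm : m ≤ n) (hml : l ≤ m)
    (hd : 2 ≤ d) (ha1 : 1 ≤ a) (ha9 : a ≤ 9)
    (heq : lucasK k n * lucasK k m * lucasK k l = a * ((10 ^ d - 1) / 9)) :
    False :=
  no_solution_when_n_le_k_general k n m l d a hnk hnm hml hd heq
end

section
/- Let k ≥ 2, let α be the unique real root of x^k − x^{k−1} − ⋯ − x − 1 in (2(1 − 2^{−k}), 2), and let f_k(x) = (x − 1)/(2 + (k+1)(x − 2)). Then for all integers d ≥ 4, s ≥ 0 and 1 ≤ a ≤ 9 one has (a/9)·10^d ≠ f_k(α)^3 · (2α − 1)^3 · α^s. (Equivalently, the linear form Λ_1 = α^{−(n+m+l−3)}·10^d·f_k(α)^{−3}(2α−1)^{−3}·(a/9) − 1 is nonzero whenever d ≥ 4 and n + m + l ≥ 3.) -/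
/-!
Suppose equality holds. Clearing denominators, `α` is a root of
`P = 9 ((X - 1)(2X - 1))³ Xˢ - a·10ᵈ ((k + 1) X - 2k)³ ∈ ℤ[X]`, hence so is every conjugate `z`
of `α`, i.e. every complex root of its minimal polynomial `μ` over `ℤ`, of degree `m ≥ 1`.
Multiply the absolute values of these `m` equations. As `μ ∣ Ψ_k = kBonacciPoly k`, every
conjugate satisfies `zᵏ (z - 2) = -1`, so `|z| ≤ 1` or `|z - 2| ≤ 1`, whence
`|z - 1| |2z - 1| ≤ 10`; the product of the `|z|` is `|μ(0)| = 1`, because `μ(0) ∣ Ψ_k(0) = -1`;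
and `∏ ((k + 1) z - 2k)` is the resultant of `μ` and `(k + 1) X - 2k`, an integer, nonzero
because `2k / (k + 1)` is a rational non-integer and so no root of the monic `Ψ_k`. Hence
`10^{4m} ≤ (a·10ᵈ)ᵐ ≤ 9ᵐ 10^{3m}`, which is absurd.
-/

open Polynomial

namespace Polynomial

theorem aeval_eq_zero_of_mem_aroots_minpoly {R S K : Type*} [CommRing R] [IsDomain R]
    [IsIntegrallyClosed R] [CommRing S] [IsDomain S] [Algebra R S] [Module.IsTorsionFree R S]
    [CommRing K] [IsDomain K] [Algebra R K] {x : S} (hx : IsIntegral R x) {q : R[X]}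
    (hq : aeval x q = 0) {z : K} (hz : z ∈ (minpoly R x).aroots K) : aeval z q = 0 :=
  aeval_eq_zero_of_dvd_aeval_eq_zero (minpoly.isIntegrallyClosed_dvd hx hq) (mem_aroots'.mp hz).2

theorem Monic.prod_aroots_aeval_eq_resultant {R K : Type*} [CommRing R] [Field K] [IsAlgClosed K]
    [Algebra R K] {p : R[X]} (hp : p.Monic) (q : R[X]) :
    ((p.aroots K).map fun z => aeval z q).prod = algebraMap R K (p.resultant q) := by
  have h := resultant_eq_prod_eval (p.map (algebraMap R K)) (q.map (algebraMap R K))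
    q.natDegree natDegree_map_le (IsAlgClosed.splits _)
  rw [(hp.map _).leadingCoeff, one_pow, one_mul, hp.natDegree_map, resultant_map_map] at h
  simpa [aroots, eval_map_algebraMap] using h.symm

theorem Monic.one_le_norm_prod_aroots_aeval {p q : ℤ[X]} (hp : p.Monic)
    (hq : ∀ z ∈ p.aroots ℂ, aeval z q ≠ 0) :
    1 ≤ ‖((p.aroots ℂ).map fun z => aeval z q).prod‖ := by
  have hres := hp.prod_aroots_aeval_eq_resultant (K := ℂ) q
  have hne : p.resultant q ≠ 0 := by
    intro h0
    rw [h0, map_zero, Multiset.prod_eq_zero_iff] at hres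
    obtain ⟨z, hz, hz0⟩ := Multiset.mem_map.mp hres
    exact hq z hz hz0
  rw [hres, algebraMap_int_eq, eq_intCast, Complex.norm_intCast]
  exact_mod_cast Int.one_le_abs hne

theorem Monic.norm_prod_aroots_eq_one {p : ℤ[X]} (hp : p.Monic) (hunit : IsUnit (p.coeff 0)) :
    ‖(p.aroots ℂ).prod‖ = 1 := by
  have h := (IsAlgClosed.splits (p.map (algebraMap ℤ ℂ))).coeff_zero_eq_prod_roots_of_monic
    (hp.map _)
  rw [coeff_map, algebraMap_int_eq, eq_intCast] at h
  have := congrArg norm h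
  rw [Complex.norm_intCast, ← Int.cast_abs, Int.isUnit_iff_abs_eq.mp hunit, norm_mul, norm_pow,
    norm_neg, norm_one, one_pow, one_mul] at this
  exact_mod_cast this.symm

theorem Monic.not_forall_mem_aroots_mul_pow_eq {p q : ℤ[X]} (hp : p.Monic)
    (hdeg : p.natDegree ≠ 0) (hunit : IsUnit (p.coeff 0)) (hq : ∀ z ∈ p.aroots ℂ, aeval z q ≠ 0)
    {u : ℂ → ℂ} {B : ℝ} (hu : ∀ z ∈ p.aroots ℂ, ‖u z‖ ≤ B) {c A : ℂ} (hcA : ‖c‖ * B < ‖A‖) (s : ℕ) :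
    ¬ ∀ z ∈ p.aroots ℂ, c * u z * z ^ s = A * aeval z q := by
  intro h
  set R := p.aroots ℂ
  have hcard : Multiset.card R = p.natDegree := IsAlgClosed.card_aroots_eq_natDegree
  obtain ⟨z₀, hz₀⟩ := Multiset.card_pos_iff_exists_mem.mp (hcard ▸ Nat.pos_of_ne_zero hdeg)
  have hB : 0 ≤ B := (norm_nonneg _).trans (hu z₀ hz₀)
  have hprod : c ^ p.natDegree * (R.map u).prod * R.prod ^ s
      = A ^ p.natDegree * (R.map fun z => aeval z q).prod := by
    have := congrArg Multiset.prod (Multiset.map_congr rfl h)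
    simpa [Multiset.prod_map_mul, Multiset.prod_map_pow, hcard] using this
  have hU : ‖(R.map u).prod‖ ≤ B ^ p.natDegree := by
    have hnorm : ‖(R.map u).prod‖ = ((R.map u).map (normHom : ℂ →*₀ ℝ)).prod :=
      map_multiset_prod (normHom : ℂ →*₀ ℝ) _
    rw [hnorm, ← hcard, ← Multiset.card_map u R]
    refine Multiset.prod_map_le_pow_card (fun _ _ => by simp) ?_
    simpa using hu
  have key := congrArg norm hprod
  rw [norm_mul, norm_mul, norm_pow, norm_pow, hp.norm_prod_aroots_eq_one hunit, one_pow, mul_one,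
    norm_mul, norm_pow] at key
  have : ‖A‖ ^ p.natDegree ≤ (‖c‖ * B) ^ p.natDegree := by
    calc ‖A‖ ^ p.natDegree ≤ ‖A‖ ^ p.natDegree * ‖(R.map fun z => aeval z q).prod‖ :=
          le_mul_of_one_le_right (by positivity) (hp.one_le_norm_prod_aroots_aeval hq)
      _ = ‖c‖ ^ p.natDegree * ‖(R.map u).prod‖ := key.symm
      _ ≤ ‖c‖ ^ p.natDegree * B ^ p.natDegree := by gcongr
      _ = (‖c‖ * B) ^ p.natDegree := (mul_pow _ _ _).symm
  exact (pow_lt_pow_left₀ hcA (by positivity) hdeg).not_ge this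

end Polynomial

noncomputable def kBonacciPoly (k : ℕ) : ℤ[X] := X ^ k - ∑ i ∈ Finset.range k, X ^ i

namespace kBonacciPoly

theorem monic (k : ℕ) : (kBonacciPoly k).Monic := by
  refine monic_X_pow_sub (mem_degreeLT.mp (Submodule.sum_mem _ fun i hi => mem_degreeLT.mpr ?_))
  rw [degree_X_pow]
  exact_mod_cast Finset.mem_range.mp hi

theorem coeff_zero {k : ℕ} (hk : k ≠ 0) : (kBonacciPoly k).coeff 0 = -1 := by
  simp [kBonacciPoly, coeff_X_pow, Ne.symm hk, Nat.pos_of_ne_zero hk]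

theorem aeval_eq {A : Type*} [CommRing A] (k : ℕ) (z : A) :
    aeval z (kBonacciPoly k) = z ^ k - ∑ i ∈ Finset.range k, z ^ i := by
  simp [kBonacciPoly]

theorem pow_mul_sub_two_eq_neg_one {A : Type*} [CommRing A] {k : ℕ} {z : A}
    (hz : aeval z (kBonacciPoly k) = 0) : z ^ k * (z - 2) = -1 := by
  rw [aeval_eq, sub_eq_zero] at hz
  linear_combination (z - 1) * hz + geom_sum_mul z k

theorem norm_sub_one_le_two {k : ℕ} {z : ℂ} (hz : aeval z (kBonacciPoly k) = 0) :
    ‖z - 1‖ ≤ 2 := by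
  rcases le_or_gt ‖z‖ 1 with h | h
  · calc ‖z - 1‖ ≤ ‖z‖ + ‖(1 : ℂ)‖ := norm_sub_le _ _
      _ ≤ 2 := by rw [norm_one]; linarith
  · have hk : ‖z‖ ^ k * ‖z - 2‖ = 1 := by
      simpa using congrArg norm (pow_mul_sub_two_eq_neg_one hz)
    have h2 : ‖z - 2‖ ≤ 1 := by nlinarith [one_le_pow₀ (n := k) h.le, norm_nonneg (z - 2)]
    calc ‖z - 1‖ ≤ ‖z - 2‖ + ‖(2 : ℂ) - 1‖ := norm_sub_le_norm_sub_add_norm_sub _ _ _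
      _ ≤ 2 := by norm_num; linarith

theorem norm_sub_one_mul_two_mul_sub_one_le {k : ℕ} {z : ℂ} (hz : aeval z (kBonacciPoly k) = 0) :
    ‖(z - 1) * (2 * z - 1)‖ ≤ 10 := by
  have h1 := norm_sub_one_le_two hz
  have h2 : ‖2 * z - 1‖ ≤ 5 :=
    calc ‖2 * z - 1‖ = ‖2 * (z - 1) + 1‖ := by ring_nf
      _ ≤ ‖2 * (z - 1)‖ + ‖(1 : ℂ)‖ := norm_add_le _ _
      _ ≤ 5 := by rw [norm_mul, norm_one, Complex.norm_two]; linarith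
  rw [norm_mul]
  nlinarith [norm_nonneg (z - 1), norm_nonneg (2 * z - 1)]

theorem isUnit_coeff_zero_minpoly {S : Type*} [CommRing S] [IsDomain S]
    [Module.IsTorsionFree ℤ S] {k : ℕ} (hk : k ≠ 0) {x : S} (hx : aeval x (kBonacciPoly k) = 0) :
    IsUnit ((minpoly ℤ x).coeff 0) := by
  refine isUnit_of_dvd_unit ?_ (coeff_zero hk ▸ isUnit_one.neg)
  simpa using map_dvd constantCoeff (minpoly.isIntegrallyClosed_dvd ⟨_, monic k, hx⟩ hx)

theorem add_one_mul_sub_two_mul_ne_zero {K : Type*} [Field K] [CharZero K] {k : ℕ} (hk : 2 ≤ k)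
    {z : K} (hz : aeval z (kBonacciPoly k) = 0) : (k + 1) * z - 2 * k ≠ 0 := by
  intro h
  have hzr : z = algebraMap ℚ K (2 * k / (k + 1)) := by
    rw [eq_ratCast]; push_cast
    rw [eq_div_iff (by exact_mod_cast (Nat.succ_ne_zero k))]
    linear_combination h
  rw [hzr, aeval_algebraMap_apply, map_eq_zero] at hz
  obtain ⟨n, hrn, hn⟩ := exists_integer_of_is_root_of_monic (monic k) hz
  rw [coeff_zero (by omega), dvd_neg] at hn
  have hk1 : (k + 1 : ℚ) ≠ 0 := by positivity
  rw [algebraMap_int_eq, eq_intCast, div_eq_iff hk1] at hrn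
  have hkq : (2 : ℚ) ≤ k := by exact_mod_cast hk
  rcases Int.isUnit_iff.mp (isUnit_of_dvd_one hn) with rfl | rfl <;> push_cast at hrn <;> linarith

end kBonacciPoly

theorem Lambda1_nonzero_general
    (k : ℕ) (hk : 2 ≤ k)
    (α : ℝ) (hroot : α ^ k = ∑ i ∈ Finset.range k, α ^ i) :
    ∀ d s a : ℕ, 4 ≤ d → 1 ≤ a → a ≤ 9 →
      ((a : ℝ) / 9) * 10 ^ d ≠
        ((α - 1) / (2 + ((k : ℝ) + 1) * (α - 2))) ^ 3 * (2 * α - 1) ^ 3 * α ^ s := by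
  intro d s a hd ha _ heq
  have hΨ : aeval α (kBonacciPoly k) = 0 := by rw [kBonacciPoly.aeval_eq, hroot, sub_self]
  have hα : IsIntegral ℤ α := ⟨_, kBonacciPoly.monic k, hΨ⟩
  have hconj : ∀ z ∈ (minpoly ℤ α).aroots ℂ, aeval z (kBonacciPoly k) = 0 :=
    fun z hz => aeval_eq_zero_of_mem_aroots_minpoly hα hΨ hz
  set g : ℤ[X] := ((k : ℤ[X]) + 1) * X - 2 * (k : ℤ[X])
  set P : ℤ[X] := 9 * ((X - 1) * (2 * X - 1)) ^ 3 * X ^ s - (a : ℤ[X]) * 10 ^ d * g ^ 3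
  have hP : aeval α P = 0 := by
    have hD : 2 + ((k : ℝ) + 1) * (α - 2) ≠ 0 := fun h =>
      kBonacciPoly.add_one_mul_sub_two_mul_ne_zero hk hΨ (by linear_combination h)
    field_simp at heq
    simp only [P, g, map_sub, map_mul, map_pow, map_add, map_natCast, map_ofNat, map_one, aeval_X]
    linear_combination -heq
  refine (minpoly.monic hα).not_forall_mem_aroots_mul_pow_eq (minpoly.natDegree_pos hα).ne'
    (kBonacciPoly.isUnit_coeff_zero_minpoly (by omega) hΨ) (q := g ^ 3)
    (u := fun z => ((z - 1) * (2 * z - 1)) ^ 3) (B := 10 ^ 3) (c := 9) (A := a * 10 ^ d)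
    ?_ ?_ ?_ s ?_
  · intro z hz
    simpa [g, map_ofNat] using
      pow_ne_zero 3 (kBonacciPoly.add_one_mul_sub_two_mul_ne_zero hk (hconj z hz))
  · intro z hz
    rw [norm_pow]
    exact pow_le_pow_left₀ (norm_nonneg _)
      (kBonacciPoly.norm_sub_one_mul_two_mul_sub_one_le (hconj z hz)) 3
  · rw [norm_mul, norm_pow, Complex.norm_natCast]
    calc ‖(9 : ℂ)‖ * 10 ^ 3 < 10 ^ 4 := by norm_num
      _ ≤ 10 ^ d := pow_le_pow_right₀ (by norm_num) hd
      _ ≤ a * ‖(10 : ℂ)‖ ^ d := by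
        rw [Complex.norm_ofNat]
        exact le_mul_of_one_le_left (by positivity) (by exact_mod_cast ha)
  · intro z hz
    have hPz := aeval_eq_zero_of_mem_aroots_minpoly hα hP hz
    simp only [P, g, map_sub, map_mul, map_pow, map_add, map_natCast, map_ofNat, map_one, aeval_X]
      at hPz ⊢
    linear_combination hPz

theorem Lambda1_nonzero
    (k : ℕ) (hk : 2 ≤ k)
    (α : ℝ) (hroot : α ^ k = ∑ i ∈ Finset.range k, α ^ i)
    (hα₁ : 2 * (1 - (2 : ℝ) ^ (-(k : ℤ))) < α) (hα₂ : α < 2) :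
    ∀ d s a : ℕ, 4 ≤ d → 1 ≤ a → a ≤ 9 →
      ((a : ℝ) / 9) * 10 ^ d ≠
        ((α - 1) / (2 + ((k : ℝ) + 1) * (α - 2))) ^ 3 * (2 * α - 1) ^ 3 * α ^ s :=
  Lambda1_nonzero_general k hk α hroot
end
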